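/- arXiv:2601.10869 — 7 statements merged into one kernel-verified Lean document; each statement's English description precedes it below -/
import Mathlib

section
/- Let A be an n×n real symmetric positive definite matrix, D an m×m real symmetric negative semidefinite matrix, and B an n×m real matrix. Then the (n+m)×(n+m) block matrix M = [[A, B],[Bᵀ, D]] is invertible if and only if the intersection of the kernel of B (as a linear map ℝᵐ → ℝⁿ) and the kernel of D is the trivial subspace {0}. -/
/-!
If `M = [[A, B], [Bᵀ, D]]` kills `(x, y)`, pairing the two block equations with `x` and `y`
gives `xᵀAx = -xᵀBy = -yᵀBᵀx = yᵀDy`. The left side is positive unless `x = 0` and the right side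
is nonpositive, so `x = 0`, and then the equations say exactly `By = 0` and `Dy = 0`.
-/

open Matrix

theorem Matrix.fromBlocks_transpose_mulVec_sumElim_eq_zero_iff {n m : Type*} [Fintype n]
    [Fintype m] {A : Matrix n n ℝ} {D : Matrix m m ℝ} {B : Matrix n m ℝ} (hA : A.PosDef)
    (hD : (-D).PosSemidef) {x : n → ℝ} {y : m → ℝ} :
    fromBlocks A B Bᵀ D *ᵥ Sum.elim x y = 0 ↔ x = 0 ∧ B *ᵥ y = 0 ∧ D *ᵥ y = 0 := by
  constructor
  · rw [fromBlocks_mulVec, ← Sum.elim_zero_zero, Sum.elim_eq_iff]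
    simp only [Sum.elim_comp_inl, Sum.elim_comp_inr]
    rintro ⟨hfirst, hsecond⟩
    have hx : x = 0 := by
      by_contra hx
      have hAx : 0 < x ⬝ᵥ A *ᵥ x := by simpa using hA.dotProduct_mulVec_pos hx
      have hDy : 0 ≤ -(y ⬝ᵥ D *ᵥ y) := by simpa [neg_mulVec] using hD.dotProduct_mulVec_nonneg y
      have hquad : x ⬝ᵥ A *ᵥ x = y ⬝ᵥ D *ᵥ y :=
        calc x ⬝ᵥ A *ᵥ x = -(x ⬝ᵥ B *ᵥ y) := by
              rw [eq_neg_iff_add_eq_zero, ← dotProduct_add, hfirst, dotProduct_zero]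
          _ = -(y ⬝ᵥ Bᵀ *ᵥ x) := by
              rw [dotProduct_mulVec, ← mulVec_transpose, dotProduct_comm]
          _ = y ⬝ᵥ D *ᵥ y := by
              rw [neg_eq_iff_add_eq_zero, ← dotProduct_add, hsecond, dotProduct_zero]
      linarith
    subst hx
    exact ⟨rfl, by simpa using hfirst, by simpa using hsecond⟩
  · rintro ⟨rfl, hBy, hDy⟩
    simp [fromBlocks_mulVec, hBy, hDy]

/-- **Nonsingularity condition for block matrix.**
Let `A` be `n×n` real symmetric positive definite, `D` be `m×m` real symmetric negative
semidefinite, and `B` be `n×m` real.  Then the block matrix `[[A, B],[Bᵀ, D]]` is invertible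
iff `ker B ⊓ ker D = ⊥` (as linear maps `ℝᵐ → ℝⁿ` and `ℝᵐ → ℝᵐ`). -/
theorem block_matrix_nonsingular_iff {n m : ℕ}
    (A : Matrix (Fin n) (Fin n) ℝ) (D : Matrix (Fin m) (Fin m) ℝ)
    (B : Matrix (Fin n) (Fin m) ℝ)
    (hA : A.PosDef) (hD : (-D).PosSemidef) :
    IsUnit (Matrix.fromBlocks A B Bᵀ D) ↔
      LinearMap.ker B.mulVecLin ⊓ LinearMap.ker D.mulVecLin = ⊥ := by
  set M := fromBlocks A B Bᵀ D
  calc IsUnit M ↔ ∀ v, M *ᵥ v = 0 → v = 0 := by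
        rw [← mulVec_injective_iff_isUnit]
        exact injective_iff_map_eq_zero M.mulVecLin
    _ ↔ ∀ x y, M *ᵥ Sum.elim x y = 0 → Sum.elim x y = 0 :=
        ⟨fun h _ _ => h _, fun h v => by simpa using h (v ∘ Sum.inl) (v ∘ Sum.inr)⟩
    _ ↔ ∀ y, B *ᵥ y = 0 → D *ᵥ y = 0 → y = 0 := by
        simp only [M, fromBlocks_transpose_mulVec_sumElim_eq_zero_iff hA hD]
        simp only [← Sum.elim_zero_zero, Sum.elim_eq_iff, and_imp]
        exact ⟨fun h y hBy hDy => (h 0 y rfl hBy hDy).2, fun h _ y hx hBy hDy => ⟨hx, h y hBy hDy⟩⟩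
    _ ↔ LinearMap.ker B.mulVecLin ⊓ LinearMap.ker D.mulVecLin = ⊥ := by
        simp [Submodule.eq_bot_iff, and_imp]
end

section
/- Let Π be an n×n real symmetric positive semidefinite matrix, R an m×m real symmetric positive definite matrix, λ > 0 a real number, B an n×m real matrix, and G an n×q real matrix. Assume GᵀΠG − λI is negative semidefinite and that the column space of G is contained in the column space of B. Then the (m+q)×(m+q) block matrix M = [[BᵀΠB + R, BᵀΠG],[GᵀΠB, GᵀΠG − λI]] is invertible. -/
open Matrix

/-!
Suppose `M (u, v) = 0`. Pairing the first block row with `u` and the second with `v` and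
subtracting, the cross terms `(Bu)ᵀΠ(Gv)` cancel by symmetry of `Π`, leaving
`(Bu)ᵀΠ(Bu) + uᵀRu + (λ|v|² - (Gv)ᵀΠ(Gv)) = 0`; all three terms are nonnegative, so `uᵀRu = 0`
and `u = 0`. The first block row then says `BᵀΠGv = 0`; since `range G ⊆ range B` means
`ker Bᵀ ⊆ ker Gᵀ`, also `GᵀΠGv = 0`, and the second block row reduces to `λv = 0`.
-/

namespace Matrix

variable {K : Type*} [CommSemiring K] {m n q : Type*} [Fintype m] [Fintype n] [Fintype q]

theorem IsSymm.dotProduct_mulVec_comm {P : Matrix n n K} (hP : P.IsSymm) (a b : n → K) :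
    a ⬝ᵥ P *ᵥ b = b ⬝ᵥ P *ᵥ a := by
  rw [dotProduct_mulVec, ← mulVec_transpose, hP.eq, dotProduct_comm]

theorem transpose_mulVec_eq_zero_of_range_le {B : Matrix n m K} {G : Matrix n q K}
    (hrange : LinearMap.range G.mulVecLin ≤ LinearMap.range B.mulVecLin) {w : n → K}
    (hw : Bᵀ *ᵥ w = 0) : Gᵀ *ᵥ w = 0 := by
  refine dotProduct_eq_zero _ fun c => ?_
  obtain ⟨d, hd⟩ := hrange (LinearMap.mem_range_self G.mulVecLin c)
  replace hd : B *ᵥ d = G *ᵥ c := hd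
  rw [mulVec_transpose, ← dotProduct_mulVec, ← hd, dotProduct_mulVec, ← mulVec_transpose, hw,
    zero_dotProduct]

end Matrix

section SaddleMatrix

variable {m n q : Type*} [Fintype m] [Fintype n] [Fintype q] [DecidableEq q]

/-- `[B G]ᵀ Π [B G] + diag(R, -λI)`, written blockwise. -/
def saddleMatrix (P : Matrix n n ℝ) (R : Matrix m m ℝ) (B : Matrix n m ℝ) (G : Matrix n q ℝ)
    (lam : ℝ) : Matrix (m ⊕ q) (m ⊕ q) ℝ :=
  fromBlocks (Bᵀ * P * B + R) (Bᵀ * P * G) (Gᵀ * P * B) (Gᵀ * P * G - lam • 1)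

variable {P : Matrix n n ℝ} {R : Matrix m m ℝ} {B : Matrix n m ℝ} {G : Matrix n q ℝ} {lam : ℝ}

theorem saddleMatrix_mulVec_sum_elim (u : m → ℝ) (v : q → ℝ) :
    saddleMatrix P R B G lam *ᵥ Sum.elim u v =
      Sum.elim (Bᵀ *ᵥ (P *ᵥ (B *ᵥ u + G *ᵥ v)) + R *ᵥ u)
        (Gᵀ *ᵥ (P *ᵥ (B *ᵥ u + G *ᵥ v)) - lam • v) := by
  simp only [saddleMatrix, fromBlocks_mulVec, Sum.elim_comp_inl, Sum.elim_comp_inr, add_mulVec,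
    sub_mulVec, ← mulVec_mulVec, mulVec_add, smul_mulVec, one_mulVec]
  congr 1 <;> abel

theorem fst_eq_zero_of_saddleMatrix_mulVec_eq_zero (hP : P.PosSemidef) (hR : R.PosDef)
    (hNSD : (lam • 1 - Gᵀ * P * G).PosSemidef) {u : m → ℝ} {v : q → ℝ}
    (h : saddleMatrix P R B G lam *ᵥ Sum.elim u v = 0) : u = 0 := by
  rw [saddleMatrix_mulVec_sum_elim, ← Sum.elim_zero_zero, Sum.elim_eq_iff] at h
  obtain ⟨h₁, h₂⟩ := h
  set x := B *ᵥ u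
  set y := G *ᵥ v
  have e₁ : x ⬝ᵥ P *ᵥ (x + y) + u ⬝ᵥ R *ᵥ u = 0 := by
    rw [dotProduct_comm, ← dotProduct_transpose_mulVec, ← dotProduct_add, h₁, dotProduct_zero]
  have e₂ : y ⬝ᵥ P *ᵥ (x + y) - lam * (v ⬝ᵥ v) = 0 := by
    rw [dotProduct_comm, ← dotProduct_transpose_mulVec, ← smul_eq_mul, ← dotProduct_smul,
      ← dotProduct_sub, h₂, dotProduct_zero]
  rw [mulVec_add, dotProduct_add] at e₁ e₂
  have hx : 0 ≤ x ⬝ᵥ P *ᵥ x := by simpa using hP.dotProduct_mulVec_nonneg x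
  have hy : 0 ≤ lam * (v ⬝ᵥ v) - y ⬝ᵥ P *ᵥ y := by
    have := hNSD.dotProduct_mulVec_nonneg v
    rwa [star_trivial, sub_mulVec, dotProduct_sub, smul_mulVec, one_mulVec, dotProduct_smul,
      smul_eq_mul, ← mulVec_mulVec, ← mulVec_mulVec, dotProduct_transpose_mulVec,
      dotProduct_comm (P *ᵥ _)] at this
  have hxy : x ⬝ᵥ P *ᵥ y = y ⬝ᵥ P *ᵥ x :=
    (isHermitian_iff_isSymm.1 hP.isHermitian).dotProduct_mulVec_comm x y
  by_contra hu
  have hRu : 0 < u ⬝ᵥ R *ᵥ u := by simpa using hR.dotProduct_mulVec_pos hu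
  linarith

theorem snd_eq_zero_of_saddleMatrix_mulVec_eq_zero
    (hrange : LinearMap.range G.mulVecLin ≤ LinearMap.range B.mulVecLin) (hlam : 0 < lam)
    {v : q → ℝ} (h : saddleMatrix P R B G lam *ᵥ Sum.elim 0 v = 0) : v = 0 := by
  rw [saddleMatrix_mulVec_sum_elim, ← Sum.elim_zero_zero, Sum.elim_eq_iff] at h
  obtain ⟨h₁, h₂⟩ := h
  simp only [mulVec_zero, zero_add, add_zero] at h₁ h₂
  rw [transpose_mulVec_eq_zero_of_range_le hrange h₁, zero_sub, neg_eq_zero] at h₂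
  exact (smul_eq_zero.1 h₂).resolve_left hlam.ne'

end SaddleMatrix

/-- **Invertibility under range inclusion.**
Let `Π ⪰ 0`, `R ≻ 0`, `λ > 0`, with `GᵀΠG − λI ⪯ 0` and `range G ⊆ range B`.  Then the
block matrix `[[BᵀΠB + R, BᵀΠG],[GᵀΠB, GᵀΠG − λI]]` is invertible. -/
theorem range_inclusion_invertible {n m q : ℕ}
    (Pm : Matrix (Fin n) (Fin n) ℝ) (R : Matrix (Fin m) (Fin m) ℝ)
    (B : Matrix (Fin n) (Fin m) ℝ) (G : Matrix (Fin n) (Fin q) ℝ) (lam : ℝ)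
    (hPm : Pm.PosSemidef) (hR : R.PosDef) (hlam : 0 < lam)
    (hNSD : (lam • (1 : Matrix (Fin q) (Fin q) ℝ) - Gᵀ * Pm * G).PosSemidef)
    (hrange : LinearMap.range G.mulVecLin ≤ LinearMap.range B.mulVecLin) :
    IsUnit (Matrix.fromBlocks (Bᵀ * Pm * B + R) (Bᵀ * Pm * G) (Gᵀ * Pm * B)
      (Gᵀ * Pm * G - lam • (1 : Matrix (Fin q) (Fin q) ℝ))) := by
  change IsUnit (saddleMatrix Pm R B G lam)
  refine mulVec_injective_iff_isUnit.1 <|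
    (injective_iff_map_eq_zero (mulVecLin _)).2 fun x hx => ?_
  rw [← Sum.elim_comp_inl_inr x] at hx ⊢
  have hu := fst_eq_zero_of_saddleMatrix_mulVec_eq_zero hPm hR hNSD hx
  rw [hu] at hx ⊢
  rw [snd_eq_zero_of_saddleMatrix_mulVec_eq_zero hrange hlam hx, Sum.elim_zero_zero]
end

section
/- Let A be n×n, B n×m, G n×q real matrices, Q an n×n real symmetric positive semidefinite matrix, R an m×m real symmetric positive definite matrix, and Π an n×n real symmetric positive semidefinite matrix. Let λ > 0 be a real number with λ ≥ ‖GᵀΠG‖ (operator 2-norm), and assume the column space of G is contained in the column space of B. Then the block matrix M(λ,Π) = [[BᵀΠB + R, BᵀΠG],[GᵀΠB, GᵀΠG − λI]] is invertible, and the matrix Π⁺ := Q + AᵀΠA − AᵀΠ[B G] M(λ,Π)⁻¹ [B G]ᵀ ΠA is symmetric positive semidefinite. -/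
/-!
Write `S = BᵀΠB + R ≻ 0` and `X = BᵀΠG`. The Schur complement of `S` in `M(λ,Π)` is
`-(λI - GᵀΠG + XᵀS⁻¹X)`. Here `λI - GᵀΠG ⪰ 0` by the norm bound, and on `ker X` the quadratic
form of `GᵀΠG` vanishes because `range G ⊆ range B`; so the bracket is positive definite and
`M(λ,Π)` is invertible.

For the update, let `[K; L] = -M(λ,Π)⁻¹ [B G]ᵀ Π A` be the gain. Completing the square with the two
block rows of `M(λ,Π) [K; L] = -[B G]ᵀ Π A` gives
`Π⁺ = Q + (A + BK)ᵀ Π (A + BK) + Kᵀ R K + Lᵀ (λI - GᵀΠG) L`, a sum of positive semidefinite matrices.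
-/

open Matrix

/-- The induced 2-norm (operator norm) of a real matrix, via its action on Euclidean space. -/
noncomputable def l2n {a b : ℕ} (M : Matrix (Fin a) (Fin b) ℝ) : ℝ :=
  ‖LinearMap.toContinuousLinearMap (Matrix.toEuclideanLin M)‖

theorem dotProduct_mulVec_le_of_l2n_le {a : ℕ} {D : Matrix (Fin a) (Fin a) ℝ} {lam : ℝ}
    (h : l2n D ≤ lam) (v : Fin a → ℝ) : v ⬝ᵥ D *ᵥ v ≤ lam * (v ⬝ᵥ v) := by
  set T := LinearMap.toContinuousLinearMap (toEuclideanLin D)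
  set x : EuclideanSpace ℝ (Fin a) := WithLp.toLp 2 v
  have hinner : v ⬝ᵥ D *ᵥ v = inner ℝ x (T x) := by
    simp [x, T, EuclideanSpace.inner_toLp_toLp, dotProduct_comm]
  have hnorm : v ⬝ᵥ v = ‖x‖ ^ 2 := by
    rw [← real_inner_self_eq_norm_sq, EuclideanSpace.inner_toLp_toLp, star_trivial]
  calc v ⬝ᵥ D *ᵥ v ≤ ‖x‖ * ‖T x‖ := hinner ▸ real_inner_le_norm x (T x)
    _ ≤ ‖x‖ * (l2n D * ‖x‖) := by gcongr; exact T.le_opNorm x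
    _ ≤ ‖x‖ * (lam * ‖x‖) := by gcongr
    _ = lam * (v ⬝ᵥ v) := by rw [hnorm]; ring

theorem posSemidef_smul_one_sub_of_l2n_le {a : ℕ} {D : Matrix (Fin a) (Fin a) ℝ} {lam : ℝ}
    (hD : D.IsHermitian) (h : l2n D ≤ lam) :
    (lam • (1 : Matrix (Fin a) (Fin a) ℝ) - D).PosSemidef := by
  refine .of_dotProduct_mulVec_nonneg (by simpa [IsHermitian, conjTranspose_sub] using hD)
    fun v => ?_
  simpa [sub_mulVec, smul_mulVec] using dotProduct_mulVec_le_of_l2n_le h v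

namespace Matrix

variable {m n q : Type*} [Fintype m] [Fintype n] [Fintype q]

theorem PosSemidef.transpose_mul_mul_same {A : Matrix n n ℝ} (hA : A.PosSemidef)
    (B : Matrix n m ℝ) : (Bᵀ * A * B).PosSemidef := by
  simpa only [conjTranspose_eq_transpose_of_trivial] using hA.conjTranspose_mul_mul_same B

theorem posDef_add_transpose_mul_mul_of_ker {N : Matrix q q ℝ} {S : Matrix m m ℝ}
    {X : Matrix m q ℝ} (hN : N.PosSemidef) (hS : S.PosDef)
    (hker : ∀ x, x ≠ 0 → X *ᵥ x = 0 → 0 < x ⬝ᵥ N *ᵥ x) : (N + Xᵀ * S * X).PosDef := by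
  have hXSX := hS.posSemidef.transpose_mul_mul_same X
  refine .of_dotProduct_mulVec_pos (hN.isHermitian.add hXSX.isHermitian) fun x hx => ?_
  have hquad : x ⬝ᵥ (Xᵀ * S * X) *ᵥ x = (X *ᵥ x) ⬝ᵥ S *ᵥ (X *ᵥ x) := by
    rw [← mulVec_mulVec, ← mulVec_mulVec, dotProduct_transpose_mulVec, dotProduct_comm]
  rw [star_trivial, add_mulVec, dotProduct_add, hquad]
  by_cases hXx : X *ᵥ x = 0
  · simpa [hXx] using hker x hx hXx
  · exact add_pos_of_nonneg_of_pos (by simpa using hN.dotProduct_mulVec_nonneg x)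
      (by simpa using hS.dotProduct_mulVec_pos hXx)

theorem dotProduct_mulVec_transpose_mul_mul_eq_zero_of_range_le {α : Type*} [CommRing α]
    {P : Matrix n n α} {B : Matrix n m α} {G : Matrix n q α}
    (hGB : LinearMap.range G.mulVecLin ≤ LinearMap.range B.mulVecLin) {x : q → α}
    (hx : (Bᵀ * P * G) *ᵥ x = 0) : x ⬝ᵥ (Gᵀ * P * G) *ᵥ x = 0 := by
  obtain ⟨w, hw⟩ := hGB ⟨x, rfl⟩
  simp only [mulVecLin_apply] at hw
  calc x ⬝ᵥ (Gᵀ * P * G) *ᵥ x = (P *ᵥ G *ᵥ x) ⬝ᵥ B *ᵥ w := by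
        rw [hw, ← mulVec_mulVec, ← mulVec_mulVec, dotProduct_transpose_mulVec]
    _ = w ⬝ᵥ (Bᵀ * P * G) *ᵥ x := by
        rw [← dotProduct_transpose_mulVec, mulVec_mulVec, mulVec_mulVec]
    _ = 0 := by rw [hx, dotProduct_zero]

end Matrix

section Riccati

variable {α : Type*} [CommRing α] {m n q : Type*} [Fintype m] [Fintype n] [Fintype q]

/-- The matrix `M(λ,Π)`, with `λI` replaced by an arbitrary `Λ`. -/
def riccatiMatrix (B : Matrix n m α) (G : Matrix n q α) (P : Matrix n n α) (R : Matrix m m α)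
    (Λ : Matrix q q α) : Matrix (m ⊕ q) (m ⊕ q) α :=
  fromBlocks (Bᵀ * P * B + R) (Bᵀ * P * G) (Gᵀ * P * B) (Gᵀ * P * G - Λ)

theorem riccati_completed_square {A P : Matrix n n α} {B : Matrix n m α} {G : Matrix n q α}
    {R : Matrix m m α} {Λ : Matrix q q α} {K : Matrix m n α} {L : Matrix q n α}
    (hP : P.IsSymm) (hΛ : Λ.IsSymm)
    (hK : (Bᵀ * P * B + R) * K + Bᵀ * P * G * L = -(Bᵀ * P * A))
    (hL : Gᵀ * P * B * K + (Gᵀ * P * G - Λ) * L = -(Gᵀ * P * A)) :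
    Aᵀ * P * A + Aᵀ * P * (B * K + G * L) =
      (A + B * K)ᵀ * P * (A + B * K) + Kᵀ * R * K + Lᵀ * (Λ - Gᵀ * P * G) * L := by
  have hK' := congrArg (Kᵀ * ·) hK
  have hL' := congrArg (fun X => Xᵀ * L) hL
  simp only [transpose_add, transpose_mul, transpose_sub, transpose_neg, transpose_transpose,
    hP.eq, hΛ.eq] at hL'
  simp only [Matrix.mul_add, Matrix.add_mul, Matrix.mul_sub, Matrix.sub_mul, Matrix.mul_neg,
    Matrix.neg_mul, transpose_add, transpose_mul, Matrix.mul_assoc] at hK' hL' ⊢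
  linear_combination (norm := abel) hL' - hK'

theorem posDef_sub_add_transpose_mul_inv_mul_of_range_le [DecidableEq m]
    {P : Matrix n n ℝ} {B : Matrix n m ℝ} {G : Matrix n q ℝ} {R : Matrix m m ℝ}
    {Λ : Matrix q q ℝ} (hS : (Bᵀ * P * B + R).PosDef) (hΛ : Λ.PosDef)
    (hN : (Λ - Gᵀ * P * G).PosSemidef)
    (hGB : LinearMap.range G.mulVecLin ≤ LinearMap.range B.mulVecLin) :
    (Λ - Gᵀ * P * G + (Bᵀ * P * G)ᵀ * (Bᵀ * P * B + R)⁻¹ * (Bᵀ * P * G)).PosDef := by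
  refine posDef_add_transpose_mul_mul_of_ker hN hS.inv fun x hx hXx => ?_
  rw [sub_mulVec, dotProduct_sub,
    dotProduct_mulVec_transpose_mul_mul_eq_zero_of_range_le hGB hXx, sub_zero]
  simpa using hΛ.dotProduct_mulVec_pos hx

theorem isUnit_riccatiMatrix [DecidableEq m] [DecidableEq q] {P : Matrix n n ℝ}
    {B : Matrix n m ℝ} {G : Matrix n q ℝ} {R : Matrix m m ℝ} {Λ : Matrix q q ℝ}
    (hP : P.IsSymm) (hS : (Bᵀ * P * B + R).PosDef) (hΛ : Λ.PosDef)
    (hN : (Λ - Gᵀ * P * G).PosSemidef)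
    (hGB : LinearMap.range G.mulVecLin ≤ LinearMap.range B.mulVecLin) :
    IsUnit (riccatiMatrix B G P R Λ) := by
  have := hS.isUnit.invertible
  have hC : Gᵀ * P * B = (Bᵀ * P * G)ᵀ := by
    simp only [transpose_mul, transpose_transpose, hP.eq, Matrix.mul_assoc]
  rw [riccatiMatrix, isUnit_fromBlocks_iff_of_invertible₁₁, invOf_eq_nonsing_inv, hC]
  convert (posDef_sub_add_transpose_mul_inv_mul_of_range_le hS hΛ hN hGB).isUnit.neg using 1
  abel

theorem posSemidef_riccati_update [DecidableEq m] [DecidableEq q] {A Q P : Matrix n n ℝ}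
    {B : Matrix n m ℝ} {G : Matrix n q ℝ} {R : Matrix m m ℝ} {Λ : Matrix q q ℝ}
    (hQ : Q.PosSemidef) (hR : R.PosSemidef) (hP : P.PosSemidef)
    (hN : (Λ - Gᵀ * P * G).PosSemidef) (hM : IsUnit (riccatiMatrix B G P R Λ)) :
    (Q + Aᵀ * P * A - Aᵀ * P * fromCols B G * (riccatiMatrix B G P R Λ)⁻¹ *
      (fromCols B G)ᵀ * P * A).PosSemidef := by
  have hPs : P.IsSymm := isHermitian_iff_isSymm.mp hP.isHermitian
  have hΛ : Λ.IsSymm := by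
    have := hN.isHermitian.add (hP.transpose_mul_mul_same G).isHermitian
    rwa [sub_add_cancel, isHermitian_iff_isSymm] at this
  set K := -((riccatiMatrix B G P R Λ)⁻¹ * ((fromCols B G)ᵀ * P * A)) with hK
  have hMK : riccatiMatrix B G P R Λ * K = -((fromCols B G)ᵀ * P * A) := by
    rw [hK, Matrix.mul_neg, ← Matrix.mul_assoc,
      mul_nonsing_inv _ ((isUnit_iff_isUnit_det _).mp hM), Matrix.one_mul]
  rw [← fromRows_toRows K, riccatiMatrix, fromBlocks_mul_fromRows, transpose_fromCols,
    fromRows_mul, fromRows_mul, fromRows_neg] at hMK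
  obtain ⟨hK₁, hK₂⟩ := fromRows_inj hMK
  have hgain : Aᵀ * P * fromCols B G * (riccatiMatrix B G P R Λ)⁻¹ * (fromCols B G)ᵀ * P * A =
      -(Aᵀ * P * (B * K.toRows₁ + G * K.toRows₂)) := by
    rw [← fromCols_mul_fromRows, fromRows_toRows, hK]
    simp only [Matrix.mul_neg, neg_neg, Matrix.mul_assoc]
  rw [hgain, sub_neg_eq_add, add_assoc, riccati_completed_square hPs hΛ hK₁ hK₂]
  exact hQ.add (((hP.transpose_mul_mul_same _).add (hR.transpose_mul_mul_same _)).add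
    (hN.transpose_mul_mul_same _))

end Riccati

/-- **One Riccati step preserves positive semidefiniteness.**
Let `Q ⪰ 0`, `R ≻ 0`, `Π ⪰ 0`, `λ > 0` with `λ ≥ ‖GᵀΠG‖` and `range G ⊆ range B`.  Then
`M(λ,Π) = [[BᵀΠB + R, BᵀΠG],[GᵀΠB, GᵀΠG − λI]]` is invertible and
`Π⁺ = Q + AᵀΠA − AᵀΠ[B G] M(λ,Π)⁻¹ [B G]ᵀ ΠA` is symmetric positive semidefinite. -/
theorem riccati_step_psd {n m q : ℕ}
    (A : Matrix (Fin n) (Fin n) ℝ) (B : Matrix (Fin n) (Fin m) ℝ)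
    (G : Matrix (Fin n) (Fin q) ℝ)
    (Q : Matrix (Fin n) (Fin n) ℝ) (R : Matrix (Fin m) (Fin m) ℝ)
    (Pm : Matrix (Fin n) (Fin n) ℝ) (lam : ℝ)
    (hQ : Q.PosSemidef) (hR : R.PosDef) (hPm : Pm.PosSemidef)
    (hlam : 0 < lam) (hlamge : l2n (Gᵀ * Pm * G) ≤ lam)
    (hrange : LinearMap.range G.mulVecLin ≤ LinearMap.range B.mulVecLin) :
    IsUnit (Matrix.fromBlocks (Bᵀ * Pm * B + R) (Bᵀ * Pm * G) (Gᵀ * Pm * B)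
        (Gᵀ * Pm * G - lam • (1 : Matrix (Fin q) (Fin q) ℝ))) ∧
      (Q + Aᵀ * Pm * A -
        Aᵀ * Pm * Matrix.fromCols B G *
          (Matrix.fromBlocks (Bᵀ * Pm * B + R) (Bᵀ * Pm * G) (Gᵀ * Pm * B)
            (Gᵀ * Pm * G - lam • (1 : Matrix (Fin q) (Fin q) ℝ)))⁻¹ *
          (Matrix.fromCols B G)ᵀ * Pm * A).PosSemidef := by
  have hS : (Bᵀ * Pm * B + R).PosDef := PosDef.posSemidef_add (hPm.transpose_mul_mul_same B) hR
  have hN : (lam • 1 - Gᵀ * Pm * G).PosSemidef :=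
    posSemidef_smul_one_sub_of_l2n_le (hPm.transpose_mul_mul_same G).isHermitian hlamge
  have hM : IsUnit (riccatiMatrix B G Pm R (lam • 1)) :=
    isUnit_riccatiMatrix (isHermitian_iff_isSymm.mp hPm.isHermitian) hS (PosDef.one.smul hlam)
      hN hrange
  exact ⟨hM, posSemidef_riccati_update hQ hR.posSemidef hPm hN hM⟩
end

section
/- Let A be n×n, B n×m, G n×q real matrices with G ≠ 0 and the column space of G contained in the column space of B. Let Q be an n×n real symmetric positive definite matrix, R an m×m real symmetric positive definite matrix, and P_f an n×n real symmetric positive definite matrix. Fix a horizon N ≥ 1 and a vector of multipliers (λ₀,…,λ_{N−1}) ∈ ℝᴺ. Define backward: Π_N = P_f, and for k = N−1 down to 0, Π_k = Q + AᵀΠ_{k+1}A − AᵀΠ_{k+1}[B G] M_k⁻¹ [B G]ᵀ Π_{k+1}A, where M_k = [[BᵀΠ_{k+1}B + R, BᵀΠ_{k+1}G],[GᵀΠ_{k+1}B, GᵀΠ_{k+1}G − λ_k I]]. If λ_{N−1} ≥ ‖GᵀP_f G‖ and λ_k ≥ ‖GᵀΠ_{k+1}G‖ for all k = 0,…,N−2,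 then for every k = 0,…,N−1 the matrix M_k is invertible and Π_k is symmetric positive semidefinite; moreover Π_k ⪰ Q (so Π_k is positive definite) for every k = 0,…,N−1. -/
/-! If `z = (u, w)` solves `M z = -[B G]ᵀ P y`, completing the square gives
`yᵀ P (y + [B G] z) = (y + B u)ᵀ P (y + B u) + uᵀ R u + (λ |w|² - (G w)ᵀ P (G w))`,
and every summand is nonnegative as soon as `λ ≥ ‖GᵀPG‖`.
For `y = 0` this forces `u = 0`; then the first block row gives `BᵀPGw = 0`, which against
`Gw ∈ range B` kills `(Gw)ᵀP(Gw)`, and `λ > 0` (since `GᵀPG ≠ 0`) gives `w = 0`: `M` is invertible.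
For general `y` the left side is the quadratic form of `P - P [B G] M⁻¹ [B G]ᵀ P`, so
`Π_k - Q = Aᵀ (P - P [B G] M⁻¹ [B G]ᵀ P) A ⪰ 0` with `P = Π_{k+1}`, and backward induction on `k`
propagates positive definiteness from `Π_N = P_f`. -/

open Matrix

/-- The block matrix `M_k = [[BᵀPB + R, BᵀPG],[GᵀPB, GᵀPG − λI]]`. -/
noncomputable def Mmat {n m q : ℕ} (B : Matrix (Fin n) (Fin m) ℝ) (G : Matrix (Fin n) (Fin q) ℝ)
    (R : Matrix (Fin m) (Fin m) ℝ) (P : Matrix (Fin n) (Fin n) ℝ) (lam : ℝ) :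
    Matrix (Fin m ⊕ Fin q) (Fin m ⊕ Fin q) ℝ :=
  Matrix.fromBlocks (Bᵀ * P * B + R) (Bᵀ * P * G) (Gᵀ * P * B)
    (Gᵀ * P * G - lam • (1 : Matrix (Fin q) (Fin q) ℝ))

/-- One step of the Riccati-type recursion:
`Q + AᵀPA − AᵀP[B G] M⁻¹ [B G]ᵀ PA`. -/
noncomputable def riccStep {n m q : ℕ} (A : Matrix (Fin n) (Fin n) ℝ)
    (B : Matrix (Fin n) (Fin m) ℝ) (G : Matrix (Fin n) (Fin q) ℝ)
    (Q : Matrix (Fin n) (Fin n) ℝ) (R : Matrix (Fin m) (Fin m) ℝ)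
    (P : Matrix (Fin n) (Fin n) ℝ) (lam : ℝ) : Matrix (Fin n) (Fin n) ℝ :=
  Q + Aᵀ * P * A -
    Aᵀ * P * Matrix.fromCols B G * (Mmat B G R P lam)⁻¹ * (Matrix.fromCols B G)ᵀ * P * A

/-- The backward recursion `Π_N = P_f`, `Π_k = riccStep(Π_{k+1}, λ_k)` for `k < N`. -/
noncomputable def PiSeq {n m q : ℕ} (A : Matrix (Fin n) (Fin n) ℝ)
    (B : Matrix (Fin n) (Fin m) ℝ) (G : Matrix (Fin n) (Fin q) ℝ)
    (Q : Matrix (Fin n) (Fin n) ℝ) (R : Matrix (Fin m) (Fin m) ℝ)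
    (Pf : Matrix (Fin n) (Fin n) ℝ) (N : ℕ) (lam : Fin N → ℝ) (k : ℕ) :
    Matrix (Fin n) (Fin n) ℝ :=
  if h : N ≤ k then Pf
  else riccStep A B G Q R (PiSeq A B G Q R Pf N lam (k + 1)) (lam ⟨k, by omega⟩)
termination_by N - k
decreasing_by omega

section QuadraticForms

variable {ι κ μ α : Type*} [Fintype ι] [Fintype κ] [Fintype μ] [CommRing α]

lemma dotProduct_mulVec_comm_of_isSymm {P : Matrix ι ι α} (hP : P.IsSymm) (a b : ι → α) :
    a ⬝ᵥ (P *ᵥ b) = b ⬝ᵥ (P *ᵥ a) := by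
  rw [dotProduct_mulVec, ← mulVec_transpose, hP.eq, dotProduct_comm]

lemma dotProduct_transpose_mulVec' (U : Matrix ι κ α) (u : κ → α) (x : ι → α) :
    u ⬝ᵥ (Uᵀ *ᵥ x) = (U *ᵥ u) ⬝ᵥ x := by
  rw [dotProduct_mulVec, vecMul_transpose]

lemma dotProduct_transpose_mul_mul_mulVec (P : Matrix ι ι α) (U : Matrix ι κ α)
    (V : Matrix ι μ α) (u : κ → α) (v : μ → α) :
    u ⬝ᵥ ((Uᵀ * P * V) *ᵥ v) = (U *ᵥ u) ⬝ᵥ (P *ᵥ (V *ᵥ v)) := by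
  rw [← mulVec_mulVec, ← mulVec_mulVec, dotProduct_transpose_mulVec']

end QuadraticForms

lemma Matrix.PosDef.isSymm {ι : Type*} [Fintype ι] {P : Matrix ι ι ℝ} (hP : P.PosDef) : P.IsSymm :=
  isHermitian_iff_isSymm.mp hP.1

lemma dotProduct_mulVec_le_l2n_mul {q : ℕ} (S : Matrix (Fin q) (Fin q) ℝ) (x : Fin q → ℝ) :
    x ⬝ᵥ (S *ᵥ x) ≤ l2n S * (x ⬝ᵥ x) := by
  set T := LinearMap.toContinuousLinearMap (toEuclideanLin S)
  set y : EuclideanSpace ℝ (Fin q) := WithLp.toLp 2 x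
  have hinner : x ⬝ᵥ (S *ᵥ x) = inner ℝ y (T y) := by
    simp [T, y, EuclideanSpace.inner_toLp_toLp, dotProduct_comm]
  have hnorm : x ⬝ᵥ x = ‖y‖ ^ 2 := by
    rw [← real_inner_self_eq_norm_sq, EuclideanSpace.inner_toLp_toLp, star_trivial]
  calc x ⬝ᵥ (S *ᵥ x) ≤ ‖y‖ * ‖T y‖ := hinner ▸ real_inner_le_norm y (T y)
    _ ≤ ‖y‖ * (‖T‖ * ‖y‖) := by gcongr; exact T.le_opNorm y
    _ = l2n S * (x ⬝ᵥ x) := by rw [hnorm, l2n]; ring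

lemma l2n_pos {a b : ℕ} {S : Matrix (Fin a) (Fin b) ℝ} (hS : S ≠ 0) : 0 < l2n S := by
  rw [l2n, norm_pos_iff, Ne, ← map_zero LinearMap.toContinuousLinearMap,
    LinearMap.toContinuousLinearMap.injective.eq_iff, ← map_zero toEuclideanLin,
    toEuclideanLin.injective.eq_iff]
  exact hS

lemma Matrix.PosDef.transpose_mul_mul_same_ne_zero {ι κ : Type*} [Fintype ι] [Fintype κ]
    {P : Matrix ι ι ℝ} {G : Matrix ι κ ℝ} (hP : P.PosDef) (hG : G ≠ 0) : Gᵀ * P * G ≠ 0 := by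
  contrapose! hG
  refine ext_iff_mulVec.mpr fun v => ?_
  rw [zero_mulVec]
  by_contra hv
  have hpos := hP.dotProduct_mulVec_pos hv
  rw [star_trivial, ← dotProduct_transpose_mul_mul_mulVec, hG] at hpos
  simp at hpos

section Riccati

variable {n m q : ℕ} {B : Matrix (Fin n) (Fin m) ℝ} {G : Matrix (Fin n) (Fin q) ℝ}
  {R : Matrix (Fin m) (Fin m) ℝ} {P : Matrix (Fin n) (Fin n) ℝ} {lam : ℝ}

lemma Mmat_isSymm (hR : R.IsSymm) (hP : P.IsSymm) : (Mmat B G R P lam).IsSymm := by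
  refine IsSymm.fromBlocks ?_ ?_ ?_
  · simp [IsSymm, transpose_mul, hP.eq, hR.eq, Matrix.mul_assoc]
  · simp [transpose_mul, hP.eq, Matrix.mul_assoc]
  · simp [IsSymm, transpose_mul, hP.eq, Matrix.mul_assoc]

lemma Mmat_mulVec_sumElim (u : Fin m → ℝ) (w : Fin q → ℝ) :
    Mmat B G R P lam *ᵥ Sum.elim u w =
      Sum.elim ((Bᵀ * P * B + R) *ᵥ u + (Bᵀ * P * G) *ᵥ w)
        ((Gᵀ * P * B) *ᵥ u + (Gᵀ * P * G - lam • 1) *ᵥ w) :=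
  fromBlocks_mulVec _ _ _ _ _

lemma Mmat_completeSquare (hP : P.IsSymm) {y : Fin n → ℝ} {u : Fin m → ℝ} {w : Fin q → ℝ}
    (hz : Mmat B G R P lam *ᵥ Sum.elim u w = -((fromCols B G)ᵀ *ᵥ (P *ᵥ y))) :
    y ⬝ᵥ (P *ᵥ (y + fromCols B G *ᵥ Sum.elim u w)) =
      (y + B *ᵥ u) ⬝ᵥ (P *ᵥ (y + B *ᵥ u)) + u ⬝ᵥ (R *ᵥ u) +
        (lam * (w ⬝ᵥ w) - (G *ᵥ w) ⬝ᵥ (P *ᵥ (G *ᵥ w))) := by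
  rw [Mmat_mulVec_sumElim, transpose_fromCols, fromRows_mulVec, ← Sum.elim_neg_neg,
    Sum.elim_eq_iff] at hz
  have hu := congrArg (u ⬝ᵥ ·) hz.1
  have hw := congrArg (w ⬝ᵥ ·) hz.2
  simp only [add_mulVec, sub_mulVec, smul_mulVec, one_mulVec, dotProduct_add, dotProduct_sub,
    dotProduct_neg, dotProduct_smul, smul_eq_mul, dotProduct_transpose_mul_mul_mulVec,
    dotProduct_transpose_mulVec'] at hu hw
  rw [fromCols_mulVec_sumElim]
  simp only [mulVec_add, dotProduct_add, add_dotProduct]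
  linear_combination -hu + hw + dotProduct_mulVec_comm_of_isSymm hP y (G *ᵥ w) +
    dotProduct_mulVec_comm_of_isSymm hP (B *ᵥ u) (G *ᵥ w)

lemma dotProduct_mulVec_le_of_l2n_le_s3 (hlam : l2n (Gᵀ * P * G) ≤ lam) (w : Fin q → ℝ) :
    (G *ᵥ w) ⬝ᵥ (P *ᵥ (G *ᵥ w)) ≤ lam * (w ⬝ᵥ w) := by
  rw [← dotProduct_transpose_mul_mul_mulVec]
  exact (dotProduct_mulVec_le_l2n_mul _ w).trans
    (mul_le_mul_of_nonneg_right hlam (by simpa using dotProduct_star_self_nonneg w))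

lemma Mmat_isUnit (hG : G ≠ 0)
    (hrange : LinearMap.range G.mulVecLin ≤ LinearMap.range B.mulVecLin)
    (hR : R.PosDef) (hP : P.PosDef) (hlam : l2n (Gᵀ * P * G) ≤ lam) :
    IsUnit (Mmat B G R P lam) := by
  have hlam_pos : 0 < lam := (l2n_pos (hP.transpose_mul_mul_same_ne_zero hG)).trans_le hlam
  refine mulVec_injective_iff_isUnit.mp <|
    (injective_iff_map_eq_zero (Mmat B G R P lam).mulVecLin).mpr fun z hz => ?_
  obtain ⟨u, w, rfl⟩ : ∃ u w, z = Sum.elim u w := ⟨_, _, (Sum.elim_comp_inl_inr z).symm⟩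
  rw [mulVecLin_apply] at hz
  have hsq := Mmat_completeSquare (y := 0) hP.isSymm (by simpa using hz)
  simp only [zero_add, zero_dotProduct] at hsq
  have hBu : 0 ≤ (B *ᵥ u) ⬝ᵥ (P *ᵥ (B *ᵥ u)) := by
    simpa using hP.posSemidef.dotProduct_mulVec_nonneg (B *ᵥ u)
  have hRu : 0 ≤ u ⬝ᵥ (R *ᵥ u) := by simpa using hR.posSemidef.dotProduct_mulVec_nonneg u
  have hgap := sub_nonneg.mpr (dotProduct_mulVec_le_of_l2n_le_s3 hlam w)
  have hu : u = 0 := by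
    by_contra hu
    have := hR.dotProduct_mulVec_pos hu
    rw [star_trivial] at this
    linarith
  subst hu
  obtain ⟨s, hs⟩ := hrange (LinearMap.mem_range_self G.mulVecLin w)
  rw [mulVecLin_apply, mulVecLin_apply] at hs
  rw [Mmat_mulVec_sumElim, ← Sum.elim_zero_zero, Sum.elim_eq_iff] at hz
  have hrow := congrArg (s ⬝ᵥ ·) hz.1
  simp only [mulVec_zero, zero_add, dotProduct_zero, dotProduct_transpose_mul_mul_mulVec, hs]
    at hrow
  have hw : lam * (w ⬝ᵥ w) = 0 := by
    simp only [mulVec_zero, dotProduct_zero] at hsq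
    linarith
  rw [dotProduct_self_eq_zero.mp ((mul_eq_zero.mp hw).resolve_left hlam_pos.ne'),
    Sum.elim_zero_zero]

lemma sub_mul_Mmat_inv_posSemidef (hR : R.PosDef) (hP : P.PosDef)
    (hlam : l2n (Gᵀ * P * G) ≤ lam) (hM : IsUnit (Mmat B G R P lam)) :
    (P - P * fromCols B G * (Mmat B G R P lam)⁻¹ * (fromCols B G)ᵀ * P).PosSemidef := by
  set C := fromCols B G
  set M := Mmat B G R P lam
  have hMinv : M⁻¹.IsSymm := (Mmat_isSymm hR.isSymm hP.isSymm).inv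
  refine PosSemidef.of_dotProduct_mulVec_nonneg ?_ fun y => ?_
  · rw [isHermitian_iff_isSymm]
    simp [IsSymm, transpose_mul, hP.isSymm.eq, hMinv.eq, Matrix.mul_assoc]
  set z := -(M⁻¹ *ᵥ (Cᵀ *ᵥ (P *ᵥ y)))
  have hz : M *ᵥ z = -(Cᵀ *ᵥ (P *ᵥ y)) := by
    rw [mulVec_neg, mulVec_mulVec, mul_nonsing_inv _ ((isUnit_iff_isUnit_det _).mp hM),
      one_mulVec]
  have hform : star y ⬝ᵥ ((P - P * C * M⁻¹ * Cᵀ * P) *ᵥ y) = y ⬝ᵥ (P *ᵥ (y + C *ᵥ z)) := by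
    rw [star_trivial, sub_mulVec, dotProduct_sub]
    simp only [z, ← mulVec_mulVec, mulVec_add, mulVec_neg, dotProduct_add, dotProduct_neg,
      sub_eq_add_neg]
  obtain ⟨u, w, huw⟩ : ∃ u w, z = Sum.elim u w := ⟨_, _, (Sum.elim_comp_inl_inr z).symm⟩
  rw [huw] at hz hform
  rw [hform, Mmat_completeSquare hP.isSymm hz]
  have hPy : 0 ≤ (y + B *ᵥ u) ⬝ᵥ (P *ᵥ (y + B *ᵥ u)) := by
    simpa using hP.posSemidef.dotProduct_mulVec_nonneg (y + B *ᵥ u)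
  have hRu : 0 ≤ u ⬝ᵥ (R *ᵥ u) := by simpa using hR.posSemidef.dotProduct_mulVec_nonneg u
  linarith [dotProduct_mulVec_le_of_l2n_le_s3 hlam w]

lemma riccStep_sub_eq (A Q : Matrix (Fin n) (Fin n) ℝ) :
    riccStep A B G Q R P lam - Q =
      Aᵀ * (P - P * fromCols B G * (Mmat B G R P lam)⁻¹ * (fromCols B G)ᵀ * P) * A := by
  simp only [riccStep, Matrix.mul_sub, Matrix.sub_mul, Matrix.mul_assoc]
  abel

lemma riccStep_sub_posSemidef (A Q : Matrix (Fin n) (Fin n) ℝ) (hR : R.PosDef) (hP : P.PosDef)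
    (hlam : l2n (Gᵀ * P * G) ≤ lam) (hM : IsUnit (Mmat B G R P lam)) :
    (riccStep A B G Q R P lam - Q).PosSemidef := by
  rw [riccStep_sub_eq, ← conjTranspose_eq_transpose_of_trivial]
  exact (sub_mul_Mmat_inv_posSemidef hR hP hlam hM).conjTranspose_mul_mul_same A

lemma riccStep_posDef {A Q : Matrix (Fin n) (Fin n) ℝ} (hQ : Q.PosDef) (hR : R.PosDef)
    (hP : P.PosDef) (hlam : l2n (Gᵀ * P * G) ≤ lam) (hM : IsUnit (Mmat B G R P lam)) :
    (riccStep A B G Q R P lam).PosDef := by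
  simpa using hQ.add_posSemidef (riccStep_sub_posSemidef A Q hR hP hlam hM)

end Riccati

section Recursion

variable {n m q N : ℕ} {A : Matrix (Fin n) (Fin n) ℝ} {B : Matrix (Fin n) (Fin m) ℝ}
  {G : Matrix (Fin n) (Fin q) ℝ} {Q Pf : Matrix (Fin n) (Fin n) ℝ} {R : Matrix (Fin m) (Fin m) ℝ}
  {lam : Fin N → ℝ}

lemma PiSeq_of_le {k : ℕ} (h : N ≤ k) : PiSeq A B G Q R Pf N lam k = Pf := by
  rw [PiSeq, dif_pos h]

lemma PiSeq_of_lt {k : ℕ} (h : k < N) :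
    PiSeq A B G Q R Pf N lam k =
      riccStep A B G Q R (PiSeq A B G Q R Pf N lam (k + 1)) (lam ⟨k, h⟩) := by
  rw [PiSeq, dif_neg (not_le.mpr h)]

lemma PiSeq_posDef (hG : G ≠ 0)
    (hrange : LinearMap.range G.mulVecLin ≤ LinearMap.range B.mulVecLin)
    (hQ : Q.PosDef) (hR : R.PosDef) (hPf : Pf.PosDef)
    (hlam : ∀ k (hk : k < N), l2n (Gᵀ * PiSeq A B G Q R Pf N lam (k + 1) * G) ≤ lam ⟨k, hk⟩)
    {k : ℕ} (hk : k ≤ N) : (PiSeq A B G Q R Pf N lam k).PosDef := by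
  induction hk using Nat.decreasingInduction with
  | self => rwa [PiSeq_of_le le_rfl]
  | of_succ k hk ih =>
    rw [PiSeq_of_lt hk]
    exact riccStep_posDef hQ hR ih (hlam k hk) (Mmat_isUnit hG hrange hR ih (hlam k hk))

end Recursion

/-- **Well-posedness and positive definiteness of the finite-horizon StDAR recursion.**
Under the stated hypotheses on the data and the multipliers, every `M_k` is invertible,
every `Π_k` is symmetric positive semidefinite, `Π_k ⪰ Q`, and hence `Π_k` is positive
definite, for all `k = 0,…,N−1`. -/
theorem StDAR_recursion_wellposed {n m q N : ℕ} (hN : 1 ≤ N)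
    (A : Matrix (Fin n) (Fin n) ℝ) (B : Matrix (Fin n) (Fin m) ℝ)
    (G : Matrix (Fin n) (Fin q) ℝ)
    (Q Pf : Matrix (Fin n) (Fin n) ℝ) (R : Matrix (Fin m) (Fin m) ℝ)
    (hG : G ≠ 0)
    (hrange : LinearMap.range G.mulVecLin ≤ LinearMap.range B.mulVecLin)
    (hQ : Q.PosDef) (hR : R.PosDef) (hPf : Pf.PosDef)
    (lam : Fin N → ℝ)
    (hlamN : l2n (Gᵀ * Pf * G) ≤ lam ⟨N - 1, by omega⟩)
    (hlamk : ∀ k : ℕ, (hk : k + 2 ≤ N) →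
      l2n (Gᵀ * PiSeq A B G Q R Pf N lam (k + 1) * G) ≤ lam ⟨k, by omega⟩) :
    ∀ k : ℕ, (hk : k < N) →
      IsUnit (Mmat B G R (PiSeq A B G Q R Pf N lam (k + 1)) (lam ⟨k, by omega⟩)) ∧
      (PiSeq A B G Q R Pf N lam k).PosSemidef ∧
      (PiSeq A B G Q R Pf N lam k - Q).PosSemidef ∧
      (PiSeq A B G Q R Pf N lam k).PosDef := by
  have hlam : ∀ k (hk : k < N),
      l2n (Gᵀ * PiSeq A B G Q R Pf N lam (k + 1) * G) ≤ lam ⟨k, hk⟩ := by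
    intro k hk
    rcases Nat.lt_or_ge (k + 1) N with hlt | hge
    · exact hlamk k hlt
    · obtain rfl : k = N - 1 := by omega
      rwa [PiSeq_of_le hge]
  intro k hk
  have hP := PiSeq_posDef hG hrange hQ hR hPf hlam (Nat.succ_le_of_lt hk)
  have hM := Mmat_isUnit hG hrange hR hP (hlam k hk)
  have hPk := riccStep_posDef (A := A) hQ hR hP (hlam k hk) hM
  rw [PiSeq_of_lt hk]
  exact ⟨hM, hPk.posSemidef, riccStep_sub_posSemidef A Q hR hP (hlam k hk) hM, hPk⟩
end

section
/- Let A be n×n, B n×m, G n×q real matrices, Q an n×n real symmetric positive semidefinite matrix, R an m×m real symmetric positive definite matrix, Π an n×n real symmetric positive semidefinite matrix, and λ ∈ ℝ such that both the block matrix M(λ) = [[BᵀΠB + R, BᵀΠG],[GᵀΠB, GᵀΠG − λI]] and the matrix GᵀΠG − λI are invertible. Let K ∈ ℝ^{m×n} and J ∈ ℝ^{q×n} be the unique solution of M(λ)·[K; J] = −[BᵀΠA; GᵀΠA] (stacked blocks). Then Q + AᵀΠA − AᵀΠ[B G] M(λ)⁻¹ [B G]ᵀ ΠA = Q̄ + ĀᵀΠĀ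 − ĀᵀΠG(GᵀΠG − λI)⁻¹GᵀΠĀ, where Ā = A + BK and Q̄ = Q + KᵀRK. -/
/-!
Applying `M(λ)⁻¹` to `[B G]ᵀΠA = -M(λ)[K; J]` turns the left-hand side into
`Q + AᵀΠA + AᵀΠ(BK + GJ)`. The second block row of the defining equation reads
`(GᵀΠG − λI) J = −GᵀΠĀ`, so likewise the right-hand side becomes `Q̄ + ĀᵀΠĀ + ĀᵀΠGJ`.
Expanding `Ā = A + BK`, the two differ by `Kᵀ` times the first block row
`(BᵀΠB + R) K + BᵀΠG J + BᵀΠA`, which vanishes.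
-/

open Matrix

variable {α : Type*} [CommRing α] {n k m q : Type*}

namespace Matrix

theorem inv_mul_eq_neg_of_mul_eq_neg [Fintype k] [DecidableEq k] {M : Matrix k k α}
    (hM : IsUnit M) {L Y : Matrix k n α} (h : M * L = -Y) : M⁻¹ * Y = -L := by
  obtain rfl : Y = -(M * L) := by rw [h, neg_neg]
  rw [Matrix.mul_neg, nonsing_inv_mul_cancel_left M L ((isUnit_iff_isUnit_det M).mp hM)]

theorem mul_inv_mul_eq_neg_of_mul_eq_neg [Fintype n] [Fintype k] [DecidableEq k]
    (A P : Matrix n n α) (F : Matrix n k α) {M : Matrix k k α} (hM : IsUnit M)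
    {L : Matrix k n α} (h : M * L = -(Fᵀ * P * A)) :
    Aᵀ * P * F * M⁻¹ * Fᵀ * P * A = -(Aᵀ * P * F * L) := by
  rw [← Matrix.mul_neg, ← inv_mul_eq_neg_of_mul_eq_neg hM h]
  simp only [Matrix.mul_assoc]

end Matrix

theorem closedLoop_expansion [Fintype n] [Fintype m] [Fintype q]
    (A P : Matrix n n α) (B : Matrix n m α) (G : Matrix n q α) (R : Matrix m m α)
    (K : Matrix m n α) (J : Matrix q n α)
    (h : (Bᵀ * P * B + R) * K + Bᵀ * P * G * J = -(Bᵀ * P * A)) :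
    Aᵀ * P * A + Aᵀ * P * (B * K + G * J) =
      Kᵀ * R * K + (A + B * K)ᵀ * P * (A + B * K) + (A + B * K)ᵀ * P * G * J := by
  have hK := congrArg (Kᵀ * ·) h
  simp only [Matrix.mul_add, Matrix.add_mul, Matrix.mul_assoc, Matrix.mul_neg] at hK
  simp only [transpose_add, transpose_mul, Matrix.mul_add, Matrix.add_mul, Matrix.mul_assoc]
  linear_combination (norm := abel) -hK

theorem riccati_equality_general {n m q : ℕ}
    (A : Matrix (Fin n) (Fin n) ℝ) (B : Matrix (Fin n) (Fin m) ℝ)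
    (G : Matrix (Fin n) (Fin q) ℝ)
    (Q : Matrix (Fin n) (Fin n) ℝ) (R : Matrix (Fin m) (Fin m) ℝ)
    (Pm : Matrix (Fin n) (Fin n) ℝ) (lam : ℝ)
    (hM : IsUnit (Matrix.fromBlocks (Bᵀ * Pm * B + R) (Bᵀ * Pm * G) (Gᵀ * Pm * B)
      (Gᵀ * Pm * G - lam • (1 : Matrix (Fin q) (Fin q) ℝ))))
    (hMq : IsUnit (Gᵀ * Pm * G - lam • (1 : Matrix (Fin q) (Fin q) ℝ)))
    (K : Matrix (Fin m) (Fin n) ℝ) (J : Matrix (Fin q) (Fin n) ℝ)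
    (hKJ : Matrix.fromBlocks (Bᵀ * Pm * B + R) (Bᵀ * Pm * G) (Gᵀ * Pm * B)
        (Gᵀ * Pm * G - lam • (1 : Matrix (Fin q) (Fin q) ℝ)) *
        Matrix.fromRows K J = -Matrix.fromRows (Bᵀ * Pm * A) (Gᵀ * Pm * A)) :
    Q + Aᵀ * Pm * A -
      Aᵀ * Pm * Matrix.fromCols B G *
        (Matrix.fromBlocks (Bᵀ * Pm * B + R) (Bᵀ * Pm * G) (Gᵀ * Pm * B)
          (Gᵀ * Pm * G - lam • (1 : Matrix (Fin q) (Fin q) ℝ)))⁻¹ *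
        (Matrix.fromCols B G)ᵀ * Pm * A =
    (Q + Kᵀ * R * K) + (A + B * K)ᵀ * Pm * (A + B * K) -
      (A + B * K)ᵀ * Pm * G *
        (Gᵀ * Pm * G - lam • (1 : Matrix (Fin q) (Fin q) ℝ))⁻¹ * Gᵀ * Pm * (A + B * K) := by
  set S := Gᵀ * Pm * G - lam • (1 : Matrix (Fin q) (Fin q) ℝ)
  have hBG : (fromCols B G)ᵀ * Pm * A = fromRows (Bᵀ * Pm * A) (Gᵀ * Pm * A) := by
    rw [transpose_fromCols, fromRows_mul, fromRows_mul]
  have hrows := hKJ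
  rw [fromBlocks_mul_fromRows, fromRows_neg] at hrows
  obtain ⟨hRow₁, hRow₂⟩ := fromRows_inj hrows
  have hJ : S * J = -(Gᵀ * Pm * (A + B * K)) := by
    simp only [Matrix.mul_add, ← Matrix.mul_assoc]
    linear_combination (norm := abel) hRow₂
  rw [mul_inv_mul_eq_neg_of_mul_eq_neg A Pm _ hM (hBG ▸ hKJ),
    mul_inv_mul_eq_neg_of_mul_eq_neg _ Pm G hMq hJ, Matrix.mul_assoc (Aᵀ * Pm),
    fromCols_mul_fromRows, sub_neg_eq_add, sub_neg_eq_add, add_assoc,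
    closedLoop_expansion A Pm B G R K J hRow₁]
  abel

/-- **Riccati equality (closed-loop rewriting).**
If `M(λ) = [[BᵀΠB + R, BᵀΠG],[GᵀΠB, GᵀΠG − λI]]` and `GᵀΠG − λI` are invertible and
`(K; J)` is the solution of `M(λ)·[K; J] = −[BᵀΠA; GᵀΠA]`, then
`Q + AᵀΠA − AᵀΠ[B G] M(λ)⁻¹ [B G]ᵀ ΠA
  = Q̄ + ĀᵀΠĀ − ĀᵀΠG(GᵀΠG − λI)⁻¹GᵀΠĀ`
with `Ā = A + BK` and `Q̄ = Q + KᵀRK`. -/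
theorem riccati_equality {n m q : ℕ}
    (A : Matrix (Fin n) (Fin n) ℝ) (B : Matrix (Fin n) (Fin m) ℝ)
    (G : Matrix (Fin n) (Fin q) ℝ)
    (Q : Matrix (Fin n) (Fin n) ℝ) (R : Matrix (Fin m) (Fin m) ℝ)
    (Pm : Matrix (Fin n) (Fin n) ℝ) (lam : ℝ)
    (hQ : Q.PosSemidef) (hR : R.PosDef) (hPm : Pm.PosSemidef)
    (hM : IsUnit (Matrix.fromBlocks (Bᵀ * Pm * B + R) (Bᵀ * Pm * G) (Gᵀ * Pm * B)
      (Gᵀ * Pm * G - lam • (1 : Matrix (Fin q) (Fin q) ℝ))))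
    (hMq : IsUnit (Gᵀ * Pm * G - lam • (1 : Matrix (Fin q) (Fin q) ℝ)))
    (K : Matrix (Fin m) (Fin n) ℝ) (J : Matrix (Fin q) (Fin n) ℝ)
    (hKJ : Matrix.fromBlocks (Bᵀ * Pm * B + R) (Bᵀ * Pm * G) (Gᵀ * Pm * B)
        (Gᵀ * Pm * G - lam • (1 : Matrix (Fin q) (Fin q) ℝ)) *
        Matrix.fromRows K J = -Matrix.fromRows (Bᵀ * Pm * A) (Gᵀ * Pm * A)) :
    Q + Aᵀ * Pm * A -
      Aᵀ * Pm * Matrix.fromCols B G *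
        (Matrix.fromBlocks (Bᵀ * Pm * B + R) (Bᵀ * Pm * G) (Gᵀ * Pm * B)
          (Gᵀ * Pm * G - lam • (1 : Matrix (Fin q) (Fin q) ℝ)))⁻¹ *
        (Matrix.fromCols B G)ᵀ * Pm * A =
    (Q + Kᵀ * R * K) + (A + B * K)ᵀ * Pm * (A + B * K) -
      (A + B * K)ᵀ * Pm * G *
        (Gᵀ * Pm * G - lam • (1 : Matrix (Fin q) (Fin q) ℝ))⁻¹ * Gᵀ * Pm * (A + B * K) :=
  riccati_equality_general A B G Q R Pm lam hM hMq K J hKJ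
end

section
/- Let D be an n×n real symmetric positive semidefinite matrix and d ∈ ℝⁿ. Define V(w) = ½wᵀDw + wᵀd and, for real λ with λ > ‖D‖ (so that D − λI is negative definite and invertible), define g(λ) = −½ dᵀ(D − λI)⁻¹ d + λ/2. Then the maximum of V over the unit sphere {w ∈ ℝⁿ : ‖w‖ = 1} is attained, and max_{‖w‖=1} V(w) = inf_{λ > ‖D‖} g(λ). -/
open Matrix

/-!
Write `V = quadObjective D d` and `g = sphereDual D d`.
The maximum of `V` exists because the unit sphere is compact. For `λ > ‖D‖` put
`z = (D - λ I)⁻¹ d`; for every unit vector `w` one has the identity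
`g(λ) = V(w) - ½ (w + z)ᵀ (D - λ I) (w + z)`, and `D - λ I ⪯ 0` gives weak duality `V(w) ≤ g(λ)`.

At a maximiser `w`, convexity of `V` shows that the linear functional `⟨Dw + d, ·⟩` is also
maximised at `w` on the sphere, so `Dw + d = μ w` with `μ = ⟨Dw + d, w⟩`. Then
`V(v) - V(w) = ½ (v - w)ᵀ (D - μ I) (v - w)` for unit `v`, and taking for `v` the reflections of `w`
gives `D ⪯ μ I`, hence `‖D‖ ≤ μ`. At `λ = μ + δ` the vector `y = w + z` solves
`(D - λ I) y = -δ w`, which turns the identity into `g(μ + δ) ≤ V(w) + δ / 2`.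
-/

variable {ι : Type*} [Fintype ι]

theorem dotProduct_self_nonneg {R : Type*} [Ring R] [LinearOrder R] [IsStrictOrderedRing R]
    (v : ι → R) : 0 ≤ v ⬝ᵥ v :=
  Finset.sum_nonneg fun i _ => mul_self_nonneg (v i)

theorem dotProduct_add_smul_self_of_mul_eq {u w : ι → ℝ} {t : ℝ}
    (ht : t * (u ⬝ᵥ u) = -2 * (u ⬝ᵥ w)) : (w + t • u) ⬝ᵥ (w + t • u) = w ⬝ᵥ w := by
  simp only [add_dotProduct, dotProduct_add, smul_dotProduct, dotProduct_smul, smul_eq_mul,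
    dotProduct_comm w u]
  linear_combination t * ht

theorem exists_isMaxOn_dotProduct_self_eq_one [Nonempty ι] {f : (ι → ℝ) → ℝ}
    (hf : Continuous f) : ∃ w, w ⬝ᵥ w = 1 ∧ IsMaxOn f {v | v ⬝ᵥ v = 1} w := by
  classical
  have hclosed : IsClosed {v : ι → ℝ | v ⬝ᵥ v = 1} :=
    isClosed_eq (by fun_prop) continuous_const
  have hbdd : Bornology.IsBounded {v : ι → ℝ | v ⬝ᵥ v = 1} := by
    refine (Metric.isBounded_closedBall (x := 0) (r := 1)).subset fun v hv => ?_
    rw [Metric.mem_closedBall, dist_zero_right, pi_norm_le_iff_of_nonneg zero_le_one]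
    intro i
    have : v i * v i ≤ 1 := by
      rw [← hv]
      exact Finset.single_le_sum (f := fun j => v j * v j) (fun j _ => mul_self_nonneg _)
        (Finset.mem_univ i)
    rw [Real.norm_eq_abs, abs_le]
    constructor <;> nlinarith
  obtain ⟨i⟩ := ‹Nonempty ι›
  have hsingle : (Pi.single i 1 : ι → ℝ) ⬝ᵥ Pi.single i 1 = 1 := by simp
  obtain ⟨w, hw, hmax⟩ := (Metric.isCompact_of_isClosed_isBounded hclosed hbdd).exists_isMaxOn
    ⟨_, hsingle⟩ hf.continuousOn
  exact ⟨w, hw, hmax⟩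

theorem eq_smul_of_forall_dotProduct_le {g w : ι → ℝ} (hw : w ⬝ᵥ w = 1)
    (hmax : ∀ v, v ⬝ᵥ v = 1 → v ⬝ᵥ g ≤ w ⬝ᵥ g) : g = (g ⬝ᵥ w) • w := by
  rcases eq_or_ne g 0 with rfl | hg
  · simp
  have hgg : 0 < g ⬝ᵥ g := (dotProduct_self_nonneg g).lt_of_ne' (dotProduct_self_eq_zero.not.2 hg)
  set s := √(g ⬝ᵥ g)
  have hs : 0 < s := Real.sqrt_pos.2 hgg
  have hss : s * s = g ⬝ᵥ g := Real.mul_self_sqrt hgg.le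
  -- testing against the unit vector `g / ‖g‖` gives `‖g‖ ≤ ⟪w, g⟫`
  have hle : s ≤ w ⬝ᵥ g := by
    have := hmax (s⁻¹ • g) (by simp [smul_dotProduct, dotProduct_smul, ← hss]; field_simp)
    simpa [smul_dotProduct, ← hss, hs.ne'] using this
  have hr : (g - (g ⬝ᵥ w) • w) ⬝ᵥ (g - (g ⬝ᵥ w) • w) = g ⬝ᵥ g - (g ⬝ᵥ w) ^ 2 := by
    simp only [sub_dotProduct, dotProduct_sub, smul_dotProduct, dotProduct_smul, smul_eq_mul, hw,
      dotProduct_comm w g]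
    ring
  rw [← sub_eq_zero, ← dotProduct_self_eq_zero]
  refine le_antisymm ?_ (dotProduct_self_nonneg _)
  rw [hr, dotProduct_comm g w]
  nlinarith

namespace Matrix

theorem IsSymm.dotProduct_mulVec_comm_s9 {D : Matrix ι ι ℝ} (hD : D.IsSymm) (x y : ι → ℝ) :
    x ⬝ᵥ D *ᵥ y = y ⬝ᵥ D *ᵥ x := by
  simpa [hD.eq] using dotProduct_transpose_mulVec D x y

theorem dotProduct_mulVec_nonpos_of_forall_dotProduct_ne_zero {M : Matrix ι ι ℝ}
    {w : ι → ℝ} (hw : w ≠ 0) (h : ∀ u, u ⬝ᵥ w ≠ 0 → u ⬝ᵥ M *ᵥ u ≤ 0) (u : ι → ℝ) :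
    u ⬝ᵥ M *ᵥ u ≤ 0 := by
  rcases ne_or_eq (u ⬝ᵥ w) 0 with hu | hu
  · exact h u hu
  have hww : w ⬝ᵥ w ≠ 0 := dotProduct_self_eq_zero.not.2 hw
  have hcont : Continuous fun τ : ℝ => (u + τ • w) ⬝ᵥ M *ᵥ (u + τ • w) := by fun_prop
  have hlim := (hcont.tendsto 0).mono_left (nhdsWithin_le_nhds (s := {0}ᶜ))
  simp only [zero_smul, add_zero] at hlim
  refine le_of_tendsto hlim (eventually_nhdsWithin_of_forall fun τ hτ => h _ ?_)
  simpa [add_dotProduct, hu, smul_dotProduct] using And.intro hτ hww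

variable [DecidableEq ι]

theorem dotProduct_sub_smul_one_mulVec (D : Matrix ι ι ℝ) (lam : ℝ) (x : ι → ℝ) :
    x ⬝ᵥ (D - lam • 1) *ᵥ x = x ⬝ᵥ D *ᵥ x - lam * (x ⬝ᵥ x) := by
  simp [sub_mulVec, dotProduct_sub, Matrix.smul_mulVec]

theorem isUnit_det_of_dotProduct_mulVec_ne_zero {M : Matrix ι ι ℝ}
    (h : ∀ v ≠ 0, v ⬝ᵥ M *ᵥ v ≠ 0) : IsUnit M.det := by
  refine isUnit_iff_ne_zero.2 fun hdet => ?_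
  obtain ⟨v, hv, hMv⟩ := exists_mulVec_eq_zero_iff.2 hdet
  exact h v hv (by rw [hMv, dotProduct_zero])

theorem isUnit_det_sub_smul_one_of_lt {D : Matrix ι ι ℝ} {μ lam : ℝ}
    (hle : ∀ x, x ⬝ᵥ D *ᵥ x ≤ μ * (x ⬝ᵥ x)) (hlt : μ < lam) : IsUnit (D - lam • 1).det := by
  refine isUnit_det_of_dotProduct_mulVec_ne_zero fun v hv => ?_
  have hvv : 0 < v ⬝ᵥ v := (dotProduct_self_nonneg v).lt_of_ne' (dotProduct_self_eq_zero.not.2 hv)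
  rw [dotProduct_sub_smul_one_mulVec]
  nlinarith [hle v]

end Matrix

noncomputable def quadObjective (D : Matrix ι ι ℝ) (d w : ι → ℝ) : ℝ :=
  (1 / 2) * (w ⬝ᵥ D *ᵥ w) + w ⬝ᵥ d

theorem continuous_quadObjective (D : Matrix ι ι ℝ) (d : ι → ℝ) :
    Continuous (quadObjective D d) := by
  unfold quadObjective
  fun_prop

theorem quadObjective_sub {D : Matrix ι ι ℝ} (hD : D.IsSymm) (d v w : ι → ℝ) :
    quadObjective D d v - quadObjective D d w =
      (1 / 2) * ((v - w) ⬝ᵥ D *ᵥ (v - w)) + (v - w) ⬝ᵥ (D *ᵥ w + d) := by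
  simp only [quadObjective, mulVec_sub, sub_dotProduct, dotProduct_sub, dotProduct_add]
  linear_combination (-1 / 2) * hD.dotProduct_mulVec_comm_s9 v w

theorem quadObjective_add_dotProduct_le {D : Matrix ι ι ℝ} (hD : D.PosSemidef) (d v w : ι → ℝ) :
    quadObjective D d w + (v - w) ⬝ᵥ (D *ᵥ w + d) ≤ quadObjective D d v := by
  have hsub := quadObjective_sub (isHermitian_iff_isSymm.1 hD.isHermitian) d v w
  have hnonneg : 0 ≤ (v - w) ⬝ᵥ D *ᵥ (v - w) := by
    simpa using hD.dotProduct_mulVec_nonneg (v - w)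
  linarith

theorem mulVec_add_eq_smul_of_isMaxOn {D : Matrix ι ι ℝ} (hD : D.PosSemidef) {d w : ι → ℝ}
    (hw : w ⬝ᵥ w = 1) (hmax : IsMaxOn (quadObjective D d) {v | v ⬝ᵥ v = 1} w) :
    D *ᵥ w + d = ((D *ᵥ w + d) ⬝ᵥ w) • w := by
  refine eq_smul_of_forall_dotProduct_le hw fun v hv => ?_
  have hconv := quadObjective_add_dotProduct_le hD d v w
  have hle : quadObjective D d v ≤ quadObjective D d w := hmax hv
  rw [sub_dotProduct] at hconv
  linarith

section DecidableEq

variable [DecidableEq ι]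

theorem quadObjective_sub_of_mulVec_add_eq_smul {D : Matrix ι ι ℝ} (hD : D.IsSymm)
    {d v w : ι → ℝ} {μ : ℝ} (hkkt : D *ᵥ w + d = μ • w) (hvw : v ⬝ᵥ v = w ⬝ᵥ w) :
    quadObjective D d v - quadObjective D d w =
      (1 / 2) * ((v - w) ⬝ᵥ (D - μ • 1) *ᵥ (v - w)) := by
  rw [quadObjective_sub hD, hkkt, dotProduct_sub_smul_one_mulVec]
  simp only [dotProduct_smul, smul_eq_mul, sub_dotProduct, dotProduct_sub, dotProduct_comm w v]
  linear_combination (μ / 2) * hvw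

theorem dotProduct_mulVec_le_of_isMaxOn {D : Matrix ι ι ℝ} (hD : D.IsSymm)
    {d w : ι → ℝ} {μ : ℝ} (hw : w ⬝ᵥ w = 1)
    (hmax : IsMaxOn (quadObjective D d) {v | v ⬝ᵥ v = 1} w) (hkkt : D *ᵥ w + d = μ • w)
    (u : ι → ℝ) : u ⬝ᵥ D *ᵥ u ≤ μ * (u ⬝ᵥ u) := by
  rw [← sub_nonpos, ← dotProduct_sub_smul_one_mulVec]
  refine dotProduct_mulVec_nonpos_of_forall_dotProduct_ne_zero (w := w)
    (by rintro rfl; simp at hw) (fun u hu => ?_) u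
  have huu : u ⬝ᵥ u ≠ 0 := fun h => hu (by simp [dotProduct_self_eq_zero.1 h])
  -- `w + t • u` is the reflection of `w` in the hyperplane orthogonal to `u`
  set t := -2 * (u ⬝ᵥ w) / (u ⬝ᵥ u)
  have ht : t * (u ⬝ᵥ u) = -2 * (u ⬝ᵥ w) := div_mul_cancel₀ _ huu
  have ht0 : t ≠ 0 := div_ne_zero (by simpa using hu) huu
  have hv := dotProduct_add_smul_self_of_mul_eq ht
  have hle : quadObjective D d (w + t • u) ≤ quadObjective D d w := hmax (by simp [hv, hw])
  rw [← sub_nonpos, quadObjective_sub_of_mulVec_add_eq_smul hD hkkt hv, add_sub_cancel_left,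
    mulVec_smul, smul_dotProduct, dotProduct_smul, smul_eq_mul, smul_eq_mul] at hle
  nlinarith [mul_self_pos.2 ht0]

noncomputable def sphereDual (D : Matrix ι ι ℝ) (d : ι → ℝ) (lam : ℝ) : ℝ :=
  -(1 / 2) * (d ⬝ᵥ (D - lam • 1)⁻¹ *ᵥ d) + lam / 2

theorem sphereDual_eq_quadObjective_sub {D : Matrix ι ι ℝ} (hD : D.IsSymm) (d : ι → ℝ)
    {w : ι → ℝ} {lam : ℝ} (hw : w ⬝ᵥ w = 1) (hdet : IsUnit (D - lam • 1).det) :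
    sphereDual D d lam = quadObjective D d w -
      (1 / 2) * ((w + (D - lam • 1)⁻¹ *ᵥ d) ⬝ᵥ (D - lam • 1) *ᵥ (w + (D - lam • 1)⁻¹ *ᵥ d)) := by
  unfold sphereDual quadObjective
  set B := D - lam • 1
  set z := B⁻¹ *ᵥ d
  have hBz : B *ᵥ z = d := by rw [mulVec_mulVec, mul_nonsing_inv _ hdet, one_mulVec]
  have hB : B.IsSymm := hD.sub (isSymm_one.smul lam)
  have hwBw : w ⬝ᵥ B *ᵥ w = w ⬝ᵥ D *ᵥ w - lam := by
    rw [dotProduct_sub_smul_one_mulVec, hw, mul_one]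
  simp only [mulVec_add, add_dotProduct, dotProduct_add, hBz, hB.dotProduct_mulVec_comm_s9 z w, hwBw,
    dotProduct_comm d z]
  ring

theorem quadObjective_le_sphereDual {D : Matrix ι ι ℝ} (hD : D.IsSymm) (d : ι → ℝ)
    {μ lam : ℝ} (hle : ∀ x, x ⬝ᵥ D *ᵥ x ≤ μ * (x ⬝ᵥ x)) (hlt : μ < lam) {w : ι → ℝ}
    (hw : w ⬝ᵥ w = 1) : quadObjective D d w ≤ sphereDual D d lam := by
  rw [sphereDual_eq_quadObjective_sub hD d hw (isUnit_det_sub_smul_one_of_lt hle hlt),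
    dotProduct_sub_smul_one_mulVec]
  set y := w + (D - lam • 1)⁻¹ *ᵥ d
  nlinarith [hle y, dotProduct_self_nonneg y]

theorem sphereDual_add_le {D : Matrix ι ι ℝ} (hD : D.IsSymm) {d w : ι → ℝ} {μ δ : ℝ}
    (hle : ∀ x, x ⬝ᵥ D *ᵥ x ≤ μ * (x ⬝ᵥ x)) (hkkt : D *ᵥ w + d = μ • w) (hw : w ⬝ᵥ w = 1)
    (hδ : 0 < δ) : sphereDual D d (μ + δ) ≤ quadObjective D d w + δ / 2 := by
  have hdet := isUnit_det_sub_smul_one_of_lt hle (lt_add_of_pos_right μ hδ)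
  rw [sphereDual_eq_quadObjective_sub hD d hw hdet]
  set B := D - (μ + δ) • 1
  set y := w + B⁻¹ *ᵥ d
  have hBy : B *ᵥ y = -δ • w := by
    rw [mulVec_add, mulVec_mulVec, mul_nonsing_inv _ hdet, one_mulVec, sub_mulVec, smul_mulVec,
      one_mulVec, add_smul]
    linear_combination (norm := module) hkkt
  have hyBy : y ⬝ᵥ B *ᵥ y = -δ * (y ⬝ᵥ w) := by rw [hBy, dotProduct_smul, smul_eq_mul]
  have hyBy_le : y ⬝ᵥ B *ᵥ y ≤ -δ * (y ⬝ᵥ y) := by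
    rw [dotProduct_sub_smul_one_mulVec]
    linarith [hle y]
  have hyy : y ⬝ᵥ y ≤ y ⬝ᵥ w := le_of_mul_le_mul_left (by linarith) hδ
  have hyw : (y - w) ⬝ᵥ (y - w) = y ⬝ᵥ y - 2 * (y ⬝ᵥ w) + 1 := by
    simp only [sub_dotProduct, dotProduct_sub, dotProduct_comm w y, hw]
    ring
  nlinarith [dotProduct_self_nonneg (y - w)]

end DecidableEq

theorem l2n_eq_norm_toEuclideanCLM {n : ℕ} (M : Matrix (Fin n) (Fin n) ℝ) :
    l2n M = ‖toEuclideanCLM (𝕜 := ℝ) M‖ := rfl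

theorem dotProduct_mulVec_le_l2n {n : ℕ} (M : Matrix (Fin n) (Fin n) ℝ) (x : Fin n → ℝ) :
    x ⬝ᵥ M *ᵥ x ≤ l2n M * (x ⬝ᵥ x) := by
  set T := toEuclideanCLM (𝕜 := ℝ) M
  set X := WithLp.toLp 2 x
  have hX : ‖X‖ ^ 2 = x ⬝ᵥ x := by rw [← real_inner_self_eq_norm_sq]; rfl
  calc x ⬝ᵥ M *ᵥ x = inner ℝ X (T X) := (inner_toEuclideanCLM M X X).symm
    _ ≤ ‖X‖ * ‖T X‖ := real_inner_le_norm _ _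
    _ ≤ ‖X‖ * (‖T‖ * ‖X‖) := by gcongr; exact T.le_opNorm X
    _ = l2n M * (x ⬝ᵥ x) := by rw [← hX, l2n_eq_norm_toEuclideanCLM]; ring

theorem l2n_le_of_posSemidef {n : ℕ} {D : Matrix (Fin n) (Fin n) ℝ} (hD : D.PosSemidef)
    {μ : ℝ} (hμ : 0 ≤ μ) (hle : ∀ x, x ⬝ᵥ D *ᵥ x ≤ μ * (x ⬝ᵥ x)) : l2n D ≤ μ := by
  set T := toEuclideanCLM (𝕜 := ℝ) D
  rw [l2n_eq_norm_toEuclideanCLM,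
    T.norm_eq_iSup_rayleighQuotient (isSymmetric_toEuclideanLin_iff.2 hD.isHermitian)]
  refine ciSup_le fun X => ?_
  have hX : ‖X‖ ^ 2 = X.ofLp ⬝ᵥ X.ofLp := by rw [← real_inner_self_eq_norm_sq]; rfl
  have hTX : T.reApplyInnerSelf X = X.ofLp ⬝ᵥ D *ᵥ X.ofLp := by
    rw [ContinuousLinearMap.reApplyInnerSelf_apply, real_inner_comm]
    exact inner_toEuclideanCLM D X X
  have hnonneg : 0 ≤ X.ofLp ⬝ᵥ D *ᵥ X.ofLp := by simpa using hD.dotProduct_mulVec_nonneg X.ofLp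
  rw [ContinuousLinearMap.rayleighQuotient, hTX, hX, abs_div, abs_of_nonneg hnonneg,
    abs_of_nonneg (dotProduct_self_nonneg _)]
  exact div_le_of_le_mul₀ (dotProduct_self_nonneg _) hμ (hle _)

/-- **Strong duality for maximization of a convex quadratic over the unit sphere.**
Let `D ⪰ 0` and `V(w) = ½wᵀDw + wᵀd`.  Then the maximum of `V` over the unit sphere is
attained, and it equals `inf_{λ > ‖D‖} [−½ dᵀ(D − λI)⁻¹ d + λ/2]`. -/
theorem sphere_quadratic_strong_duality {n : ℕ} (hn : 0 < n)
    (D : Matrix (Fin n) (Fin n) ℝ) (d : Fin n → ℝ) (hD : D.PosSemidef) :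
    ∃ wStar : Fin n → ℝ, (∑ i, wStar i ^ 2 = 1) ∧
      (∀ w : Fin n → ℝ, ∑ i, w i ^ 2 = 1 →
        (1 / 2) * (w ⬝ᵥ D.mulVec w) + w ⬝ᵥ d ≤
          (1 / 2) * (wStar ⬝ᵥ D.mulVec wStar) + wStar ⬝ᵥ d) ∧
      (1 / 2) * (wStar ⬝ᵥ D.mulVec wStar) + wStar ⬝ᵥ d =
        ⨅ lam : {l : ℝ // l2n D < l},
          (-(1 / 2) * (d ⬝ᵥ ((D - (lam : ℝ) • (1 : Matrix (Fin n) (Fin n) ℝ))⁻¹).mulVec d) +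
            (lam : ℝ) / 2) := by
  have hsymm : D.IsSymm := isHermitian_iff_isSymm.1 hD.isHermitian
  have hsum_sq (v : Fin n → ℝ) : ∑ i, v i ^ 2 = v ⬝ᵥ v := by simp [dotProduct, sq]
  have : Nonempty (Fin n) := ⟨⟨0, hn⟩⟩
  obtain ⟨w, hw, hmax⟩ := exists_isMaxOn_dotProduct_self_eq_one (continuous_quadObjective D d)
  have hkkt := mulVec_add_eq_smul_of_isMaxOn hD hw hmax
  set μ := (D *ᵥ w + d) ⬝ᵥ w
  have hle := dotProduct_mulVec_le_of_isMaxOn hsymm hw hmax hkkt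
  have hμ : 0 ≤ μ := by
    have := hle w
    rw [hw, mul_one] at this
    exact le_trans (by simpa using hD.dotProduct_mulVec_nonneg w) this
  refine ⟨w, (hsum_sq w).trans hw, fun v hv => hmax ((hsum_sq v).symm.trans hv), ?_⟩
  refine (ciInf_eq_of_forall_ge_of_forall_gt_exists_lt (fun lam => ?_)
    fun c (hc : quadObjective D d w < c) => ?_).symm
  · exact quadObjective_le_sphereDual hsymm d (dotProduct_mulVec_le_l2n D) lam.2 hw
  · have hnorm : l2n D ≤ μ := l2n_le_of_posSemidef hD hμ hle
    refine ⟨⟨μ + (c - quadObjective D d w), by linarith⟩, ?_⟩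
    exact (sphereDual_add_le hsymm hle hkkt hw (sub_pos.2 hc)).trans_lt (by linarith)
end

section
/- Let D be an n×n real symmetric matrix, d ∈ ℝⁿ, and λ ∈ ℝ with λ > ‖D‖. Suppose ‖(D − λI)⁻¹d‖ = 1. Then λ is a real eigenvalue of the 2n×2n block matrix P = [[D, I],[ddᵀ, D]]; an eigenvector is given by the stacked vector [(λI − D)⁻²d ; (λI − D)⁻¹d], which is nonzero. -/
/-!
Put `M = λI − D`, `u = M⁻¹d` and `w = M⁻¹u`. Since `λ > ‖D‖`, `λ` is not in the spectrum of `D`,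
so `M` is invertible, and the hypothesis says `u ⬝ u = 1`. As `M` is symmetric,
`d ⬝ w = (Mu) ⬝ w = u ⬝ (Mw) = u ⬝ u = 1`, hence `ddᵀw = d`. Then `Dw + u = λw` and
`ddᵀw + Du = d + Du = λu` are exactly the two block rows of `P (w, u) = λ (w, u)`.
-/

open Matrix

namespace Matrix

variable {ι R : Type*} [Fintype ι]

theorem inv_neg [DecidableEq ι] [CommRing R] (A : Matrix ι ι R) : (-A)⁻¹ = -A⁻¹ := by
  by_cases h : IsUnit A.det
  · refine inv_eq_left_inv ?_
    rw [neg_mul_neg, nonsing_inv_mul A h]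
  · have h' : ¬IsUnit (-A).det := by
      rwa [det_neg, IsUnit.mul_iff, and_iff_right ((isUnit_neg_one (α := R)).pow _)]
    rw [nonsing_inv_apply_not_isUnit _ h, nonsing_inv_apply_not_isUnit _ h', neg_zero]

theorem isUnit_smul_one_sub_of_l2n_lt {n : ℕ} {D : Matrix (Fin n) (Fin n) ℝ} {lam : ℝ}
    (hlam : l2n D < lam) : IsUnit (lam • (1 : Matrix (Fin n) (Fin n) ℝ) - D) := by
  -- `‖1‖ ≤ 1` rather than `NormOneClass`, which fails for `n = 0`.
  have hspec : lam ∉ spectrum ℝ (toEuclideanCLM (𝕜 := ℝ) D) := fun hmem =>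
    ((spectrum.norm_le_norm_mul_of_mem hmem).trans
      (mul_le_of_le_one_right (norm_nonneg _) ContinuousLinearMap.norm_id_le)).not_gt
      (hlam.trans_le (Real.le_norm_self lam))
  rwa [AlgEquiv.spectrum_eq, spectrum.notMem_iff, Algebra.algebraMap_eq_smul_one] at hspec

theorem dotProduct_eq_of_isSymm [CommSemiring R] {M : Matrix ι ι R} (hM : M.IsSymm)
    {d u w : ι → R} (hu : M *ᵥ u = d) (hw : M *ᵥ w = u) : d ⬝ᵥ w = u ⬝ᵥ u := by
  rw [← hu, ← hw, dotProduct_comm, dotProduct_mulVec, ← vecMul_transpose, hM.eq]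

theorem fromBlocks_mulVec_sumElim_eq_smul [DecidableEq ι] [CommRing R] {D : Matrix ι ι R}
    {d u w : ι → R} {lam : R} (hw : (lam • 1 - D) *ᵥ w = u) (hu : (lam • 1 - D) *ᵥ u = d)
    (hdw : d ⬝ᵥ w = 1) :
    fromBlocks D 1 (vecMulVec d d) D *ᵥ Sum.elim w u = lam • Sum.elim w u := by
  rw [sub_mulVec, smul_mulVec, one_mulVec] at hw hu
  have htop : D *ᵥ w + u = lam • w := by rw [← hw]; abel
  have hbot : d + D *ᵥ u = lam • u := by rw [← hu]; abel
  rw [fromBlocks_mulVec, Sum.elim_comp_inl, Sum.elim_comp_inr, one_mulVec, vecMulVec_mulVec,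
    hdw, MulOpposite.op_one, one_smul, htop, hbot]
  ext (i | i) <;> rfl

end Matrix

/-- **The multiplier is an eigenvalue of the block matrix `P = [[D, I],[ddᵀ, D]]`.**
If `D` is symmetric, `λ > ‖D‖`, and `‖(D − λI)⁻¹d‖ = 1`, then the nonzero stacked vector
`[(λI − D)⁻²d ; (λI − D)⁻¹d]` is an eigenvector of `P` with eigenvalue `λ`. -/
theorem multiplier_eigenvalue {n : ℕ}
    (D : Matrix (Fin n) (Fin n) ℝ) (d : Fin n → ℝ) (lam : ℝ)
    (hD : D.IsHermitian) (hlam : l2n D < lam)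
    (hunit : ∑ i, (((D - lam • (1 : Matrix (Fin n) (Fin n) ℝ))⁻¹).mulVec d) i ^ 2 = 1) :
    Sum.elim
        (((lam • (1 : Matrix (Fin n) (Fin n) ℝ) - D)⁻¹ *
          (lam • (1 : Matrix (Fin n) (Fin n) ℝ) - D)⁻¹).mulVec d)
        (((lam • (1 : Matrix (Fin n) (Fin n) ℝ) - D)⁻¹).mulVec d) ≠ 0 ∧
      (Matrix.fromBlocks D (1 : Matrix (Fin n) (Fin n) ℝ) (Matrix.vecMulVec d d) D).mulVec
        (Sum.elim
          (((lam • (1 : Matrix (Fin n) (Fin n) ℝ) - D)⁻¹ *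
            (lam • (1 : Matrix (Fin n) (Fin n) ℝ) - D)⁻¹).mulVec d)
          (((lam • (1 : Matrix (Fin n) (Fin n) ℝ) - D)⁻¹).mulVec d)) =
      lam • Sum.elim
          (((lam • (1 : Matrix (Fin n) (Fin n) ℝ) - D)⁻¹ *
            (lam • (1 : Matrix (Fin n) (Fin n) ℝ) - D)⁻¹).mulVec d)
          (((lam • (1 : Matrix (Fin n) (Fin n) ℝ) - D)⁻¹).mulVec d) := by
  set M : Matrix (Fin n) (Fin n) ℝ := lam • 1 - D
  have hMdet : IsUnit M.det := (isUnit_iff_isUnit_det M).mp (isUnit_smul_one_sub_of_l2n_lt hlam)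
  have hMsymm : M.IsSymm := (isSymm_one.smul lam).sub (isHermitian_iff_isSymm.mp hD)
  set u := M⁻¹ *ᵥ d
  rw [← mulVec_mulVec]
  set w := M⁻¹ *ᵥ u
  have hMu : M *ᵥ u = d := by rw [mulVec_mulVec, mul_nonsing_inv M hMdet, one_mulVec]
  have hMw : M *ᵥ w = u := by rw [mulVec_mulVec, mul_nonsing_inv M hMdet, one_mulVec]
  have huu : u ⬝ᵥ u = 1 := by
    rw [← neg_sub, Matrix.inv_neg, neg_mulVec] at hunit
    simpa only [Pi.neg_apply, neg_mul_neg, sq, dotProduct] using hunit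
  refine ⟨fun h => ?_, fromBlocks_mulVec_sumElim_eq_smul hMw hMu ?_⟩
  · have hu : u = 0 := funext fun i => congrFun h (Sum.inr i)
    simp [hu] at huu
  · rw [dotProduct_eq_of_isSymm hMsymm hMu hMw, huu]
end
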